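/- Let G₂ = K_{a,b} be the complete bipartite graph with n = a + b vertices, and 0 ≤ α ≤ 1. Then the A_α(G₂)-coronal satisfies Γ_{A_α(K_{a,b})}(η) = (ηn − αn² + 2ab) / (η² − αnη + (2α−1)ab) for all η for which ηI − A_α(K_{a,b}) is invertible and the denominator is nonzero. -/

import Mathlib

open Matrix Polynomial

open scoped Classical in
/-- The real adjacency matrix of a simple graph. -/
noncomputable def adjMat {V : Type*} (G : SimpleGraph V) : Matrix V V ℝ :=
  Matrix.of fun u v => if G.Adj u v then 1 else 0

open scoped Classical in
/-- The diagonal degree matrix of a simple graph. -/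
noncomputable def degMatrix {V : Type*} (G : SimpleGraph V) : Matrix V V ℝ :=
  Matrix.of fun u v => if u = v then ((G.neighborSet u).ncard : ℝ) else 0

/-- `A_α(G) = α D(G) + (1-α) A(G)`. -/
noncomputable def Aalpha {V : Type*} (G : SimpleGraph V) (α : ℝ) : Matrix V V ℝ :=
  α • degMatrix G + (1 - α) • adjMat G

open scoped Classical in
/-- The `M`-coronal `Γ_M(θ) = jᵀ (θ I - M)⁻¹ j`, the sum of the entries of `(θ I - M)⁻¹`. -/
noncomputable def coronal {n : Type*} [Fintype n] (M : Matrix n n ℝ) (θ : ℝ) : ℝ :=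
  ∑ i, ∑ j, (θ • (1 : Matrix n n ℝ) - M)⁻¹ i j

open scoped Classical in
/-- The vertex-edge incidence matrix of a simple graph. -/
noncomputable def incMat {V : Type*} (G : SimpleGraph V) : Matrix V G.edgeSet ℝ :=
  Matrix.of fun u e => if u ∈ (e : Sym2 V) then 1 else 0

/-- The corona `G₁ ∘ G₂`: one copy of `G₁` and one copy of `G₂` for every vertex of `G₁`,
joining vertex `i` of `G₁` to every vertex of the `i`-th copy of `G₂`. -/
def corona {V₁ V₂ : Type*} (G₁ : SimpleGraph V₁) (G₂ : SimpleGraph V₂) :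
    SimpleGraph (V₁ ⊕ V₁ × V₂) where
  Adj x y :=
    match x, y with
    | Sum.inl u, Sum.inl v => G₁.Adj u v
    | Sum.inl u, Sum.inr p => u = p.1
    | Sum.inr p, Sum.inl u => u = p.1
    | Sum.inr p, Sum.inr q => p.1 = q.1 ∧ G₂.Adj p.2 q.2
  symm := by
    constructor
    rintro (u | p) (v | q) h
    · exact G₁.symm.symm _ _ h
    · exact h
    · exact h
    · exact ⟨h.1.symm, G₂.symm.symm _ _ h.2⟩
  loopless := by
    constructor
    rintro (u | p) h
    · exact G₁.loopless.irrefl u h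
    · exact G₂.loopless.irrefl p.2 h.2

/-- The edge corona `G₁ ◊ G₂`: one copy of `G₁` and one copy of `G₂` for every edge of `G₁`,
joining both endpoints of edge `e` of `G₁` to every vertex of the copy of `G₂` indexed by `e`. -/
def edgeCorona {V₁ V₂ : Type*} (G₁ : SimpleGraph V₁) (G₂ : SimpleGraph V₂) :
    SimpleGraph (V₁ ⊕ (G₁.edgeSet × V₂)) where
  Adj x y :=
    match x, y with
    | Sum.inl u, Sum.inl v => G₁.Adj u v
    | Sum.inl u, Sum.inr p => u ∈ (p.1 : Sym2 V₁)
    | Sum.inr p, Sum.inl u => u ∈ (p.1 : Sym2 V₁)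
    | Sum.inr p, Sum.inr q => p.1 = q.1 ∧ G₂.Adj p.2 q.2
  symm := by
    constructor
    rintro (u | p) (v | q) h
    · exact G₁.symm.symm _ _ h
    · exact h
    · exact h
    · exact ⟨h.1.symm, G₂.symm.symm _ _ h.2⟩
  loopless := by
    constructor
    rintro (u | p) h
    · exact G₁.loopless.irrefl u h
    · exact G₂.loopless.irrefl p.2 h.2

/-- The `R`-vertex corona `G₁ ⊙ G₂`: the `R`-graph of `G₁` (a new vertex per edge, joined to the
endpoints of that edge) together with one copy of `G₂` for every vertex of `G₁`, joining vertex
`i` of `G₁` to every vertex of the `i`-th copy of `G₂`. -/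
def RvertexCorona {V₁ V₂ : Type*} (G₁ : SimpleGraph V₁) (G₂ : SimpleGraph V₂) :
    SimpleGraph (V₁ ⊕ (G₁.edgeSet ⊕ V₁ × V₂)) where
  Adj x y :=
    match x, y with
    | Sum.inl u, Sum.inl v => G₁.Adj u v
    | Sum.inl u, Sum.inr (Sum.inl e) => u ∈ (e : Sym2 V₁)
    | Sum.inr (Sum.inl e), Sum.inl u => u ∈ (e : Sym2 V₁)
    | Sum.inl u, Sum.inr (Sum.inr p) => u = p.1
    | Sum.inr (Sum.inr p), Sum.inl u => u = p.1
    | Sum.inr (Sum.inr p), Sum.inr (Sum.inr q) => p.1 = q.1 ∧ G₂.Adj p.2 q.2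
    | _, _ => False
  symm := by
    constructor
    rintro (u | (e | p)) (v | (f | q)) h
    all_goals first
      | exact G₁.symm.symm _ _ h
      | exact h
      | exact ⟨h.1.symm, G₂.symm.symm _ _ h.2⟩
  loopless := by
    constructor
    rintro (u | (e | p)) h
    · exact G₁.loopless.irrefl u h
    · exact h
    · exact G₂.loopless.irrefl p.2 h.2

/-- The `R`-edge corona `G₁ ⊖ G₂`: the `R`-graph of `G₁` (a new vertex per edge, joined to the
endpoints of that edge) together with one copy of `G₂` for every edge of `G₁`, joining the new
vertex of edge `e` to every vertex of the copy of `G₂` indexed by `e`. -/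
def RedgeCorona {V₁ V₂ : Type*} (G₁ : SimpleGraph V₁) (G₂ : SimpleGraph V₂) :
    SimpleGraph (V₁ ⊕ (G₁.edgeSet ⊕ G₁.edgeSet × V₂)) where
  Adj x y :=
    match x, y with
    | Sum.inl u, Sum.inl v => G₁.Adj u v
    | Sum.inl u, Sum.inr (Sum.inl e) => u ∈ (e : Sym2 V₁)
    | Sum.inr (Sum.inl e), Sum.inl u => u ∈ (e : Sym2 V₁)
    | Sum.inr (Sum.inl e), Sum.inr (Sum.inr p) => e = p.1
    | Sum.inr (Sum.inr p), Sum.inr (Sum.inl e) => e = p.1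
    | Sum.inr (Sum.inr p), Sum.inr (Sum.inr q) => p.1 = q.1 ∧ G₂.Adj p.2 q.2
    | _, _ => False
  symm := by
    constructor
    rintro (u | (e | p)) (v | (f | q)) h
    all_goals first
      | exact G₁.symm.symm _ _ h
      | exact h
      | exact h.symm
      | exact ⟨h.1.symm, G₂.symm.symm _ _ h.2⟩
  loopless := by
    constructor
    rintro (u | (e | p)) h
    · exact G₁.loopless.irrefl u h
    · exact h
    · exact G₂.loopless.irrefl p.2 h.2

/-! On `K_{a,b}` the vector that is `x` on the `a`-side and `y` on the `b`-side is mapped by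
`A_α` to a vector of the same shape, so `(ηI - A_α) v = j` reduces to a `2 × 2` linear system
whose determinant is the denominator `η² - αnη + (2α-1)ab`. Solving it by Cramer's rule gives
`v = (ηI - A_α)⁻¹ j`, and the coronal is `jᵀ v = a x + b y`. -/

section Aalpha

variable {V : Type*} (G : SimpleGraph V) [DecidableRel G.Adj]

theorem adjMat_eq_adjMatrix : adjMat G = G.adjMatrix ℝ := by
  ext u v
  simp only [adjMat, of_apply, SimpleGraph.adjMatrix_apply]
  congr!

variable [Fintype V]

theorem degMatrix_eq_degMatrix [DecidableEq V] : degMatrix G = G.degMatrix ℝ := by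
  ext u v
  simp only [degMatrix, SimpleGraph.degMatrix, of_apply, diagonal_apply]
  rw [Set.ncard_eq_toFinset_card', ← SimpleGraph.neighborFinset_def,
    SimpleGraph.card_neighborFinset_eq_degree]
  congr!

theorem Aalpha_mulVec_apply (α : ℝ) (x : V → ℝ) (v : V) :
    (Aalpha G α *ᵥ x) v = α * G.degree v * x v + (1 - α) * ∑ w ∈ G.neighborFinset v, x w := by
  classical
  rw [Aalpha, degMatrix_eq_degMatrix, adjMat_eq_adjMatrix, add_mulVec, smul_mulVec,
    smul_mulVec, Pi.add_apply, Pi.smul_apply, Pi.smul_apply,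
    SimpleGraph.degMatrix_mulVec_apply, SimpleGraph.adjMatrix_mulVec_apply, smul_eq_mul,
    smul_eq_mul, mul_assoc]

end Aalpha

section completeBipartiteGraph

variable {V W : Type*}

instance completeBipartiteGraph.decidableRelAdj : DecidableRel (completeBipartiteGraph V W).Adj :=
  fun _ _ ↦ decidable_of_iff' _ (Iff.of_eq (completeBipartiteGraph_adj ..))

variable [Fintype V] [Fintype W]

theorem completeBipartiteGraph_sum_neighborFinset_inl {M : Type*} [AddCommMonoid M]
    (f : V ⊕ W → M) (v : V) :
    ∑ w ∈ (completeBipartiteGraph V W).neighborFinset (Sum.inl v), f w = ∑ w, f (Sum.inr w) := by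
  rw [SimpleGraph.neighborFinset_eq_filter, Finset.sum_filter, Fintype.sum_sum_type]
  simp

theorem completeBipartiteGraph_sum_neighborFinset_inr {M : Type*} [AddCommMonoid M]
    (f : V ⊕ W → M) (w : W) :
    ∑ u ∈ (completeBipartiteGraph V W).neighborFinset (Sum.inr w), f u = ∑ v, f (Sum.inl v) := by
  rw [SimpleGraph.neighborFinset_eq_filter, Finset.sum_filter, Fintype.sum_sum_type]
  simp

theorem completeBipartiteGraph_degree_inl (v : V) :
    (completeBipartiteGraph V W).degree (Sum.inl v) = Fintype.card W := by
  rw [← SimpleGraph.card_neighborFinset_eq_degree, Finset.card_eq_sum_ones,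
    completeBipartiteGraph_sum_neighborFinset_inl (fun _ ↦ 1), ← Finset.card_univ,
    Finset.card_eq_sum_ones]

theorem completeBipartiteGraph_degree_inr (w : W) :
    (completeBipartiteGraph V W).degree (Sum.inr w) = Fintype.card V := by
  rw [← SimpleGraph.card_neighborFinset_eq_degree, Finset.card_eq_sum_ones,
    completeBipartiteGraph_sum_neighborFinset_inr (fun _ ↦ 1), ← Finset.card_univ,
    Finset.card_eq_sum_ones]

theorem Aalpha_completeBipartiteGraph_mulVec_elim_const (α x y : ℝ) :
    Aalpha (completeBipartiteGraph V W) α *ᵥ Sum.elim (fun _ ↦ x) (fun _ ↦ y)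
      = Sum.elim (fun _ ↦ Fintype.card W * (α * x + (1 - α) * y))
          (fun _ ↦ Fintype.card V * (α * y + (1 - α) * x)) := by
  ext (v | w) <;>
  simp only [Aalpha_mulVec_apply, completeBipartiteGraph_sum_neighborFinset_inl,
    completeBipartiteGraph_sum_neighborFinset_inr, completeBipartiteGraph_degree_inl,
    completeBipartiteGraph_degree_inr, Sum.elim_inl, Sum.elim_inr, Finset.sum_const,
    Finset.card_univ, nsmul_eq_mul] <;>
  ring

end completeBipartiteGraph

section coronal

variable {n : Type*} [Fintype n] [DecidableEq n]

theorem coronal_eq_sum_inv (M : Matrix n n ℝ) (θ : ℝ) :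
    coronal M θ = ∑ i, ∑ j, (θ • (1 : Matrix n n ℝ) - M)⁻¹ i j := by
  unfold coronal
  -- `coronal` builds the identity matrix with the classical `DecidableEq` instance
  congr!

theorem coronal_eq_sum_of_mulVec_eq_one {M : Matrix n n ℝ} {θ : ℝ}
    (hdet : det (θ • (1 : Matrix n n ℝ) - M) ≠ 0) {x : n → ℝ}
    (hx : (θ • (1 : Matrix n n ℝ) - M) *ᵥ x = 1) :
    coronal M θ = ∑ i, x i := by
  have hx_eq : x = (θ • (1 : Matrix n n ℝ) - M)⁻¹ *ᵥ 1 := by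
    rw [← hx, mulVec_mulVec, nonsing_inv_mul _ (isUnit_iff_ne_zero.mpr hdet), one_mulVec]
  simp only [coronal_eq_sum_inv, hx_eq, mulVec, dotProduct, Pi.one_apply, mul_one]

end coronal

theorem coronal_Aalpha_completeBipartite_general (a b : ℕ) (α : ℝ) (η : ℝ)
    (hinv : det (η • (1 : Matrix (Fin a ⊕ Fin b) (Fin a ⊕ Fin b) ℝ)
        - Aalpha (completeBipartiteGraph (Fin a) (Fin b)) α) ≠ 0)
    (hden : η ^ 2 - α * (a + b) * η + (2 * α - 1) * (a * b) ≠ 0) :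
    coronal (Aalpha (completeBipartiteGraph (Fin a) (Fin b)) α) η
      = (η * (a + b) - α * ((a : ℝ) + b) ^ 2 + 2 * a * b)
        / (η ^ 2 - α * (a + b) * η + (2 * α - 1) * (a * b)) := by
  set Δ := η ^ 2 - α * (a + b) * η + (2 * α - 1) * (a * b)
  set x := (η - α * a + (1 - α) * b) / Δ
  set y := (η - α * b + (1 - α) * a) / Δ
  have hsolve : (η • (1 : Matrix (Fin a ⊕ Fin b) (Fin a ⊕ Fin b) ℝ)
      - Aalpha (completeBipartiteGraph (Fin a) (Fin b)) α) *ᵥ Sum.elim (fun _ ↦ x) (fun _ ↦ y)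
      = 1 := by
    rw [sub_mulVec, smul_mulVec, one_mulVec, Aalpha_completeBipartiteGraph_mulVec_elim_const]
    ext (i | j) <;>
    simp only [Pi.sub_apply, Pi.smul_apply, Sum.elim_inl, Sum.elim_inr, smul_eq_mul,
      Fintype.card_fin, Pi.one_apply, x, y] <;>
    field_simp <;>
    ring
  rw [coronal_eq_sum_of_mulVec_eq_one hinv hsolve, Fintype.sum_sum_type]
  simp only [Sum.elim_inl, Sum.elim_inr, Finset.sum_const, Finset.card_univ, Fintype.card_fin,
    nsmul_eq_mul, x, y]
  field_simp
  ring

theorem coronal_Aalpha_completeBipartite (a b : ℕ) (α : ℝ) (h0 : 0 ≤ α) (h1 : α ≤ 1) (η : ℝ)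
    (hinv : det (η • (1 : Matrix (Fin a ⊕ Fin b) (Fin a ⊕ Fin b) ℝ)
        - Aalpha (completeBipartiteGraph (Fin a) (Fin b)) α) ≠ 0)
    (hden : η ^ 2 - α * (a + b) * η + (2 * α - 1) * (a * b) ≠ 0) :
    coronal (Aalpha (completeBipartiteGraph (Fin a) (Fin b)) α) η
      = (η * (a + b) - α * ((a : ℝ) + b) ^ 2 + 2 * a * b)
        / (η ^ 2 - α * (a + b) * η + (2 * α - 1) * (a * b)) :=
  coronal_Aalpha_completeBipartite_general a b α η hinv hden
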